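/- arXiv:1701.03699 — 3 statements merged into one kernel-verified Lean document; each statement's English description precedes it below -/
import Mathlib

section
/- Let A be an irreducible nonnegative integer k×k matrix satisfying A² = nA for some positive integer n. Then A has rank 1, trace n, and there exist vectors v, w ∈ ℤ^k with all entries strictly positive such that A = v wᵀ. -/
/-!
Since every power `A ^ (m + 1) = n ^ m • A` is a multiple of `A`, irreducibility forces all
entries of `A` to be positive. Each row of `A` is then a positive left eigenvector of `A` for the
eigenvalue `n`, and the Perron min-ratio argument shows that two such eigenvectors are
proportional, so all `2 × 2` minors of `A` vanish. Dividing each row by its gcd yields the same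
primitive vector `w`, whence `A = v wᵀ`; finally `A² = (w ⬝ᵥ v) • A` gives `trace A = n`.
-/

/-- Irreducibility of a nonnegative square integer matrix. -/
def Matrix.IsIrreducibleInt {k : ℕ} (A : Matrix (Fin k) (Fin k) ℤ) : Prop :=
  ∀ i j, ∃ m : ℕ, 1 ≤ m ∧ 0 < (A ^ m) i j

open Matrix Finset

theorem pow_succ_eq_smul_of_sq_eq_smul {R M : Type*} [Monoid R] [Monoid M] [MulAction R M]
    [IsScalarTower R M M] {a : M} {c : R} (h : a ^ 2 = c • a) (m : ℕ) :
    a ^ (m + 1) = c ^ m • a := by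
  induction m with
  | zero => simp
  | succ m ih => rw [pow_succ, ih, smul_mul_assoc, ← sq, h, smul_smul, pow_succ]

theorem Matrix.IsIrreducibleInt.pos_of_sq_eq_smul {k : ℕ} {A : Matrix (Fin k) (Fin k) ℤ}
    (hirr : A.IsIrreducibleInt) (hA0 : ∀ i j, 0 ≤ A i j) {c : ℤ} (hA : A ^ 2 = c • A)
    (i j : Fin k) : 0 < A i j := by
  obtain ⟨m, hm, hpos⟩ := hirr i j
  obtain ⟨m, rfl⟩ := Nat.exists_eq_add_of_le' hm
  rw [pow_succ_eq_smul_of_sq_eq_smul hA, Matrix.smul_apply, smul_eq_mul] at hpos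
  exact (hA0 i j).lt_of_ne fun h => by simp [← h] at hpos

theorem Matrix.mul_eq_mul_of_vecMul_eq_smul {ι K : Type*} [Fintype ι] [Field K] [LinearOrder K]
    [IsStrictOrderedRing K] {M : Matrix ι ι K} (hM : ∀ i j, 0 < M i j) {x y : ι → K}
    (hy : ∀ i, 0 < y i) {c : K} (hx : x ᵥ* M = c • x) (hyM : y ᵥ* M = c • y) (j l : ι) :
    x j * y l = x l * y j := by
  have : Nonempty ι := ⟨j⟩
  obtain ⟨j₀, -, hj₀⟩ := exists_min_image univ (fun j => x j / y j) univ_nonempty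
  -- `d` is a nonnegative eigenvector vanishing at `j₀`; positivity of `M` then forces `d = 0`.
  set d : ι → K := y j₀ • x - x j₀ • y
  have hd_apply (l : ι) : d l = y j₀ * x l - x j₀ * y l := rfl
  have hd_nonneg (l : ι) : 0 ≤ d l := by
    have := hj₀ l (mem_univ l)
    rw [div_le_div_iff₀ (hy j₀) (hy l)] at this
    linarith [hd_apply l]
  have hdM : d ᵥ* M = c • d := by
    rw [sub_vecMul, smul_vecMul, smul_vecMul, hx, hyM, smul_sub, smul_comm c, smul_comm c]
  have hsum : ∑ l, d l * M l j₀ = 0 := by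
    change (d ᵥ* M) j₀ = 0
    rw [hdM, Pi.smul_apply, hd_apply, mul_comm, sub_self, smul_zero]
  have hd (l : ι) : y j₀ * x l - x j₀ * y l = 0 :=
    (mul_eq_zero.1 ((sum_eq_zero_iff_of_nonneg fun l _ => mul_nonneg (hd_nonneg l)
      (hM l j₀).le).1 hsum l (mem_univ l))).resolve_right (hM l j₀).ne'
  apply mul_right_cancel₀ (hy j₀).ne'
  linear_combination y l * hd j - y j * hd l

theorem Matrix.mul_eq_mul_of_mul_self_eq_smul {ι K : Type*} [Fintype ι] [Field K] [LinearOrder K]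
    [IsStrictOrderedRing K] {M : Matrix ι ι K} (hM : ∀ i j, 0 < M i j) {c : K}
    (h : M * M = c • M) (i i' j j' : ι) : M i j * M i' j' = M i j' * M i' j :=
  have hrow (i : ι) : M i ᵥ* M = c • M i := by rw [← mul_apply_eq_vecMul, h]; rfl
  mul_eq_mul_of_vecMul_eq_smul hM (hM i') (hrow i) (hrow i') j j'

theorem Finset.gcd_pos_of_ne_zero {ι : Type*} {s : Finset ι} {f : ι → ℤ} {i : ι}
    (hi : i ∈ s) (hf : f i ≠ 0) : 0 < s.gcd f :=
  (Int.nonneg_of_normalize_eq_self normalize_gcd).lt_of_ne' (gcd_ne_zero_iff.2 ⟨i, hi, hf⟩)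

theorem Matrix.exists_pos_vecMulVec_of_mul_eq_mul {ι κ : Type*} [Fintype κ] [Nonempty ι]
    [Nonempty κ] {A : Matrix ι κ ℤ} (hpos : ∀ i j, 0 < A i j)
    (hminor : ∀ i i' j j', A i j * A i' j' = A i j' * A i' j) :
    ∃ (v : ι → ℤ) (w : κ → ℤ), (∀ i, 0 < v i) ∧ (∀ j, 0 < w j) ∧ A = vecMulVec v w := by
  obtain ⟨i₀⟩ := ‹Nonempty ι›
  obtain ⟨j₀⟩ := ‹Nonempty κ›
  set v : ι → ℤ := fun i => univ.gcd (A i)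
  have hv (i : ι) : 0 < v i := gcd_pos_of_ne_zero (mem_univ j₀) (hpos i j₀).ne'
  -- Row `i` is `A i j / A i₀ j` times row `i₀`, and so is its gcd.
  have hrow (i : ι) (j : κ) : v i₀ * A i j = v i * A i₀ j := by
    calc v i₀ * A i j = univ.gcd fun l => A i j * A i₀ l := by
          rw [Finset.gcd_mul_left, Int.normalize_of_nonneg (hpos i j).le, mul_comm]
      _ = univ.gcd fun l => A i₀ j * A i l := by simp_rw [hminor i i₀ j, mul_comm]
      _ = v i * A i₀ j := by
          rw [Finset.gcd_mul_left, Int.normalize_of_nonneg (hpos i₀ j).le, mul_comm]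
  have hw (j : κ) : v i₀ * (A i₀ j / v i₀) = A i₀ j :=
    Int.mul_ediv_cancel' (gcd_dvd (mem_univ j))
  refine ⟨v, fun j => A i₀ j / v i₀, hv, fun j => ?_, ?_⟩
  · exact pos_of_mul_pos_right ((hw j).symm ▸ hpos i₀ j) (hv i₀).le
  · ext i j
    apply mul_left_cancel₀ (hv i₀).ne'
    rw [vecMulVec_apply, hrow, mul_left_comm, hw]

theorem Matrix.rank_vecMulVec_eq_one {m n K : Type*} [Fintype n] [Field K] {v : m → K}
    {w : n → K} (h : vecMulVec v w ≠ 0) : (vecMulVec v w).rank = 1 := by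
  classical
  refine le_antisymm (rank_vecMulVec_le v w) (Nat.one_le_iff_ne_zero.2 fun h0 => h ?_)
  rw [rank, Submodule.finrank_eq_zero, LinearMap.range_eq_bot, ← toLin'_apply',
    ← toLin'.map_zero] at h0
  exact toLin'.injective h0

theorem Matrix.trace_vecMulVec_eq_of_mul_self_eq_smul {ι R : Type*} [Fintype ι] [CommRing R]
    [IsDomain R] {v w : ι → R} {c : R} (h : vecMulVec v w * vecMulVec v w = c • vecMulVec v w)
    (hne : vecMulVec v w ≠ 0) : (vecMulVec v w).trace = c := by
  rw [vecMulVec_mul_vecMulVec, vecMulVec_smul] at h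
  rw [trace_vecMulVec, dotProduct_comm]
  exact smul_left_injective R hne h

theorem quasi_idempotent_factorization_general {k n : ℕ} (hk : 0 < k)
    (A : Matrix (Fin k) (Fin k) ℤ) (hA0 : ∀ i j, 0 ≤ A i j) (hirr : A.IsIrreducibleInt)
    (hA : A ^ 2 = (n : ℤ) • A) :
    (A.map (Int.cast : ℤ → ℚ)).rank = 1 ∧ A.trace = (n : ℤ) ∧
      ∃ v w : Fin k → ℤ, (∀ i, 0 < v i) ∧ (∀ i, 0 < w i) ∧ A = Matrix.vecMulVec v w := by
  let i₀ : Fin k := ⟨0, hk⟩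
  have : Nonempty (Fin k) := ⟨i₀⟩
  have hpos := hirr.pos_of_sq_eq_smul hA0 hA
  rw [sq] at hA
  -- The min-ratio argument needs a field, so the minors are computed over `ℚ`.
  have hminor (i i' j j') : A i j * A i' j' = A i j' * A i' j := by
    have hAℚ : A.map (Int.cast : ℤ → ℚ) * A.map Int.cast = (n : ℚ) • A.map Int.cast := by
      ext i j
      have := congr_fun₂ hA i j
      simp only [mul_apply, Matrix.smul_apply, map_apply, smul_eq_mul] at this ⊢
      exact_mod_cast this
    have := mul_eq_mul_of_mul_self_eq_smul (by simpa using hpos) hAℚ i i' j j'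
    simp only [map_apply] at this
    exact_mod_cast this
  obtain ⟨v, w, hv, hw, rfl⟩ := exists_pos_vecMulVec_of_mul_eq_mul hpos hminor
  have hne : vecMulVec v w ≠ 0 := fun h => (hpos i₀ i₀).ne' (by simp [h])
  refine ⟨?_, trace_vecMulVec_eq_of_mul_self_eq_smul hA hne, v, w, hv, hw, rfl⟩
  have hcast : (vecMulVec v w).map (Int.cast : ℤ → ℚ) =
      vecMulVec (Int.cast ∘ v) (Int.cast ∘ w) := by
    ext; simp [vecMulVec_apply]
  rw [hcast]
  exact rank_vecMulVec_eq_one fun h =>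
    (hpos i₀ i₀).ne' (by simpa [vecMulVec_apply] using congr_fun₂ h i₀ i₀)

/-- an irreducible nonnegative integer `k × k` matrix with `A² = nA` (for a
positive integer `n`) has rank 1, trace `n`, and factors as `A = v wᵀ` with `v, w` strictly
positive integer vectors. -/
theorem quasi_idempotent_factorization {k n : ℕ} (hk : 0 < k) (hn : 0 < n)
    (A : Matrix (Fin k) (Fin k) ℤ) (hA0 : ∀ i j, 0 ≤ A i j) (hirr : A.IsIrreducibleInt)
    (hA : A ^ 2 = (n : ℤ) • A) :
    (A.map (Int.cast : ℤ → ℚ)).rank = 1 ∧ A.trace = (n : ℤ) ∧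
      ∃ v w : Fin k → ℤ, (∀ i, 0 < v i) ∧ (∀ i, 0 < w i) ∧ A = Matrix.vecMulVec v w :=
  quasi_idempotent_factorization_general hk A hA0 hirr hA
end

section
/- The map sending a pair (v, w) of strictly positive integer vectors of length k with Σ_{i=1}^k v_i w_i = n and gcd(v_1, …, v_k) = 1 to the matrix v wᵀ is a bijection onto the set of irreducible nonnegative integer k×k matrices A satisfying A² = nA. -/
open Matrix Finset

theorem pow_succ_eq_pow_smul_of_sq_eq_smul {M A : Type*} [Monoid M] [Monoid A] [MulAction M A]
    [IsScalarTower M A A] {a : A} {c : M} (h : a ^ 2 = c • a) (m : ℕ) :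
    a ^ (m + 1) = c ^ m • a := by
  induction m with
  | zero => simp
  | succ m ih => rw [pow_succ, ih, smul_mul_assoc, ← sq, h, smul_smul, ← pow_succ]

namespace Matrix

section PositiveEigenvector

variable {ι K : Type*} [Fintype ι] [Field K] [LinearOrder K] [IsStrictOrderedRing K]

theorem exists_eq_smul_of_pos_of_mulVec_eq_smul {A : Matrix ι ι K} {c : K} {x y : ι → K}
    (hA : ∀ i j, 0 < A i j) (hx : ∀ i, 0 < x i) (hAx : A *ᵥ x = c • x) (hAy : A *ᵥ y = c • y) :
    ∃ t : K, y = t • x := by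
  cases isEmpty_or_nonempty ι
  · exact ⟨0, Subsingleton.elim _ _⟩
  -- `t` is the largest scalar with `t • x ≤ y`; the gap `y - t • x` is a nonnegative
  -- eigenvector vanishing at `i₀`, and positivity of row `i₀` of `A` forces it to vanish.
  obtain ⟨i₀, -, hmin⟩ := exists_min_image univ (fun l => y l / x l) univ_nonempty
  set t := y i₀ / x i₀
  set z := y - t • x with hz
  have hz_nonneg (l : ι) : 0 ≤ z l := by
    have := hmin l (mem_univ l)
    rw [le_div_iff₀ (hx l)] at this
    simpa [z] using this
  have hz_i₀ : z i₀ = 0 := by simp [z, t, div_mul_cancel₀ _ (hx i₀).ne']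
  have hAz : A *ᵥ z = c • z := by
    rw [hz, mulVec_sub, mulVec_smul, hAx, hAy, smul_sub, smul_comm c t]
  have hrow : ∑ l, A i₀ l * z l = 0 := by
    simpa [mulVec, dotProduct, hz_i₀] using congrFun hAz i₀
  have hz_zero (l : ι) : z l = 0 := by
    have := (sum_eq_zero_iff_of_nonneg fun l _ => mul_nonneg (hA i₀ l).le (hz_nonneg l)).1
      hrow l (mem_univ l)
    exact (mul_eq_zero.1 this).resolve_left (hA i₀ l).ne'
  exact ⟨t, sub_eq_zero.1 (funext hz_zero)⟩

theorem mul_mul_eq_of_pos_of_mul_self_eq_smul {A : Matrix ι ι K} {c : K}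
    (hA : ∀ i j, 0 < A i j) (h : A * A = c • A) (i i' j j' : ι) :
    A i j * A i' j' = A i j' * A i' j := by
  have hcol (j : ι) : A *ᵥ (fun i => A i j) = c • fun i => A i j := by
    funext i
    simpa [mulVec, dotProduct, mul_apply] using congrFun (congrFun h i) j
  obtain ⟨t, ht⟩ := exists_eq_smul_of_pos_of_mulVec_eq_smul hA (fun i => hA i j) (hcol j) (hcol j')
  simp only [funext_iff, Pi.smul_apply, smul_eq_mul] at ht
  rw [ht i, ht i']
  ring

end PositiveEigenvector

theorem mul_mul_eq_of_pos_of_mul_self_eq_smul_int {ι : Type*} [Fintype ι] {A : Matrix ι ι ℤ}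
    {c : ℤ} (hA : ∀ i j, 0 < A i j) (h : A * A = c • A) (i i' j j' : ι) :
    A i j * A i' j' = A i j' * A i' j := by
  set f := Int.castRingHom ℚ
  have hℚ : A.map f * A.map f = f c • A.map f := by
    rw [← Matrix.map_mul, h, map_smul' _ _ _ (map_mul f)]
  have := mul_mul_eq_of_pos_of_mul_self_eq_smul (by simpa [f] using hA) hℚ i i' j j'
  simp only [map_apply, f, Int.coe_castRingHom] at this
  exact_mod_cast this

section IntegerFactorization

variable {m n : Type*} [Fintype m]

theorem gcd_vecMulVec_apply_of_gcd_eq_one {v : m → ℤ} {w : n → ℤ} (hv : univ.gcd v = 1) {j : n}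
    (hw : 0 ≤ w j) : univ.gcd (fun i => vecMulVec v w i j) = w j := by
  simp only [vecMulVec_apply]
  rw [Finset.gcd_mul_right, hv, Int.normalize_of_nonneg hw, one_mul]

theorem eq_of_vecMulVec_eq_of_gcd_eq_one [Nonempty n] {v v' : m → ℤ} {w w' : n → ℤ}
    (hv : univ.gcd v = 1) (hv' : univ.gcd v' = 1) (hw : ∀ j, 0 < w j) (hw' : ∀ j, 0 ≤ w' j)
    (h : vecMulVec v w = vecMulVec v' w') : v = v' ∧ w = w' := by
  obtain ⟨j₀⟩ := ‹Nonempty n›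
  have hw_eq : w = w' := funext fun j => by
    rw [← gcd_vecMulVec_apply_of_gcd_eq_one hv (hw j).le, h,
      gcd_vecMulVec_apply_of_gcd_eq_one hv' (hw' j)]
  subst hw_eq
  refine ⟨funext fun i => mul_right_cancel₀ (hw j₀).ne' ?_, rfl⟩
  simpa [vecMulVec_apply] using congrFun (congrFun h i) j₀

theorem exists_eq_vecMulVec_of_mul_mul_eq [Nonempty m] [Nonempty n] {A : Matrix m n ℤ}
    (hA : ∀ i j, 0 < A i j) (hrank : ∀ i i' j j', A i j * A i' j' = A i j' * A i' j) :
    ∃ v w, (∀ i, 0 < v i) ∧ (∀ j, 0 < w j) ∧ univ.gcd v = 1 ∧ A = vecMulVec v w := by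
  obtain ⟨i₀⟩ := ‹Nonempty m›
  obtain ⟨j₀⟩ := ‹Nonempty n›
  -- `w` must be the vector of column gcds, and `v` the primitive part of any column.
  set w : n → ℤ := fun j => univ.gcd fun i => A i j
  have hw_pos (j : n) : 0 < w j :=
    (Int.nonneg_of_normalize_eq_self normalize_gcd).lt_of_ne'
      (ne_zero_of_dvd_ne_zero (hA i₀ j).ne' (gcd_dvd (mem_univ i₀)))
  have hw_dvd (i : m) : w j₀ ∣ A i j₀ := gcd_dvd (mem_univ i)
  have hcross (i : m) (j : n) : w j₀ * A i j = A i j₀ * w j := by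
    have := congrArg (fun f => univ.gcd f) (funext fun i' => hrank i i' j j₀)
    simp only [Finset.gcd_mul_left, Int.normalize_of_nonneg (hA _ _).le] at this
    linear_combination this
  set v : m → ℤ := fun i => A i j₀ / w j₀
  have hv (i : m) : w j₀ * v i = A i j₀ := Int.mul_ediv_cancel' (hw_dvd i)
  refine ⟨v, w, fun i => pos_of_mul_pos_right (hv i ▸ hA i j₀) (hw_pos j₀).le, hw_pos,
    gcd_div_eq_one (mem_univ i₀) (hA i₀ j₀).ne', ?_⟩
  ext i j
  apply mul_left_cancel₀ (hw_pos j₀).ne'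
  rw [vecMulVec_apply, hcross, ← hv, mul_assoc]

end IntegerFactorization

section OuterProductSquare

variable {n α : Type*} [Fintype n] [CommSemiring α]

theorem vecMulVec_mul_self (v w : n → α) :
    vecMulVec v w * vecMulVec v w = (v ⬝ᵥ w) • vecMulVec v w := by
  rw [vecMulVec_mul_vecMulVec, vecMulVec_smul, dotProduct_comm]

theorem dotProduct_eq_of_vecMulVec_mul_self_eq_smul [IsDomain α] {v w : n → α} {c : α} {i j : n}
    (hv : v i ≠ 0) (hw : w j ≠ 0) (h : vecMulVec v w * vecMulVec v w = c • vecMulVec v w) :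
    v ⬝ᵥ w = c := by
  rw [vecMulVec_mul_self] at h
  have := congrFun (congrFun h i) j
  simp only [smul_apply, smul_eq_mul] at this
  exact mul_right_cancel₀ (by simpa [vecMulVec_apply] using mul_ne_zero hv hw) this

end OuterProductSquare

theorem isIrreducibleInt_of_pos {k : ℕ} {A : Matrix (Fin k) (Fin k) ℤ} (hA : ∀ i j, 0 < A i j) :
    A.IsIrreducibleInt :=
  fun i j => ⟨1, le_rfl, by simpa using hA i j⟩

theorem IsIrreducibleInt.pos_of_sq_eq_smul_s8 {k : ℕ} {A : Matrix (Fin k) (Fin k) ℤ} {c : ℤ}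
    (hA : A.IsIrreducibleInt) (hc : 0 ≤ c) (h : A ^ 2 = c • A) (i j : Fin k) : 0 < A i j := by
  obtain ⟨m, hm, hpos⟩ := hA i j
  obtain ⟨m, rfl⟩ := Nat.exists_eq_add_of_le' hm
  rw [pow_succ_eq_pow_smul_of_sq_eq_smul h, smul_apply, smul_eq_mul] at hpos
  exact pos_of_mul_pos_right hpos (pow_nonneg hc m)

end Matrix

theorem outer_product_bijection_general {n k : ℕ} (hk : 0 < k) :
    Set.BijOn (fun p : (Fin k → ℤ) × (Fin k → ℤ) => Matrix.vecMulVec p.1 p.2)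
      {p | (∀ i, 0 < p.1 i) ∧ (∀ i, 0 < p.2 i) ∧ (∑ i, p.1 i * p.2 i) = (n : ℤ) ∧
        Finset.univ.gcd p.1 = 1}
      {A : Matrix (Fin k) (Fin k) ℤ |
        (∀ i j, 0 ≤ A i j) ∧ A.IsIrreducibleInt ∧ A ^ 2 = (n : ℤ) • A} := by
  have : Nonempty (Fin k) := ⟨⟨0, hk⟩⟩
  refine ⟨?_, ?_, ?_⟩
  · rintro ⟨v, w⟩ ⟨hv, hw, hsum, -⟩
    have hpos (i j : Fin k) : 0 < vecMulVec v w i j := mul_pos (hv i) (hw j)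
    refine ⟨fun i j => (hpos i j).le, isIrreducibleInt_of_pos hpos, ?_⟩
    rw [sq, vecMulVec_mul_self]
    exact congrArg (· • _) hsum
  · rintro ⟨v, w⟩ ⟨-, hw, -, hv⟩ ⟨v', w'⟩ ⟨-, hw', -, hv'⟩ h
    obtain ⟨rfl, rfl⟩ := eq_of_vecMulVec_eq_of_gcd_eq_one hv hv' hw (fun j => (hw' j).le) h
    rfl
  · rintro A ⟨-, hirr, hsq⟩
    have hpos := hirr.pos_of_sq_eq_smul_s8 (Nat.cast_nonneg n) hsq
    rw [sq] at hsq
    obtain ⟨v, w, hv, hw, hgcd, rfl⟩ := exists_eq_vecMulVec_of_mul_mul_eq hpos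
      (mul_mul_eq_of_pos_of_mul_self_eq_smul_int hpos hsq)
    let i₀ : Fin k := ⟨0, hk⟩
    exact ⟨(v, w), ⟨hv, hw,
      dotProduct_eq_of_vecMulVec_mul_self_eq_smul (hv i₀).ne' (hw i₀).ne' hsq, hgcd⟩, rfl⟩

/-- for fixed positive integers `n` and `k`, the map `(v, w) ↦ v wᵀ` is a
bijection from the set of pairs of strictly positive integer vectors of length `k` with
`∑ i, v i * w i = n` and `gcd (v 1, …, v k) = 1` onto the set of irreducible nonnegative
integer `k × k` matrices `A` with `A² = nA`. -/
theorem outer_product_bijection {n k : ℕ} (hn : 0 < n) (hk : 0 < k) :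
    Set.BijOn (fun p : (Fin k → ℤ) × (Fin k → ℤ) => Matrix.vecMulVec p.1 p.2)
      {p | (∀ i, 0 < p.1 i) ∧ (∀ i, 0 < p.2 i) ∧ (∑ i, p.1 i * p.2 i) = (n : ℤ) ∧
        Finset.univ.gcd p.1 = 1}
      {A : Matrix (Fin k) (Fin k) ℤ |
        (∀ i j, 0 ≤ A i j) ∧ A.IsIrreducibleInt ∧ A ^ 2 = (n : ℤ) • A} :=
  outer_product_bijection_general hk
end

section
/- Let p_n denote the number of generalized partitions of n (pairs of equal-length positive integer tuples (v, w) with Σ v_i w_i = n and v_1 w_1 ≥ v_2 w_2 ≥ ⋯ ≥ v_k w_k), and q_n the number of such with gcd(v_1,…,v_k) = 1 (gcd = v_1 when k = 1). Then p_n = Σ_{r | n} q_r and q_n = Σ_{r | n} μ(r) p_{n/r} for all n ≥ 1. -/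
/-- A generalized partition of `n`: a pair of equal-length tuples `(v, w)` of positive
integers (of some length `k ≥ 1`) with `∑ i, v i * w i = n` and weakly decreasing products
`v 1 * w 1 ≥ v 2 * w 2 ≥ ⋯ ≥ v k * w k`. -/
def GenPart (n : ℕ) : Set (Σ k : ℕ, (Fin k → ℕ) × (Fin k → ℕ)) :=
  {p | 0 < p.1 ∧ (∀ i, 0 < p.2.1 i) ∧ (∀ i, 0 < p.2.2 i) ∧ (∑ i, p.2.1 i * p.2.2 i = n) ∧
    Antitone fun i => p.2.1 i * p.2.2 i}

/-- The number of generalized partitions of `n`. -/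
noncomputable def genPartCount (n : ℕ) : ℕ := Nat.card (GenPart n)

/-- The number of generalized partitions of `n` whose first tuple has gcd `1`. -/
noncomputable def genPartGcdOneCount (n : ℕ) : ℕ :=
  Nat.card {p ∈ GenPart n | Finset.univ.gcd p.2.1 = 1}

/-! Multiplying the first tuple by `d > 0` maps the generalized partitions of `m` with
`gcd v = 1` bijectively onto those of `d * m` with `gcd v = d`. As `gcd v` divides
`∑ vᵢ wᵢ = n`, sorting the partitions of `n` by `gcd v` gives `p n = ∑_{d ∣ n} q (n / d)`,
and Möbius inversion turns this into the second identity. -/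

lemma Set.Finite.card_eq_sum_card_fiberwise {α β : Type*} [DecidableEq β] {s : Set α}
    (hs : s.Finite) {f : α → β} {t : Finset β} (hf : ∀ a ∈ s, f a ∈ t) :
    Nat.card s = ∑ b ∈ t, Nat.card {a ∈ s | f a = b} := by
  classical
  rw [Nat.card_eq_card_finite_toFinset hs,
    Finset.card_eq_sum_card_fiberwise fun a ha => hf a (hs.mem_toFinset.1 ha)]
  refine Finset.sum_congr rfl fun b _ => ?_
  rw [Nat.card_eq_card_finite_toFinset (hs.sep _)]
  congr 1
  ext a
  simp

section GenPart

variable {n : ℕ} {p : Σ k : ℕ, (Fin k → ℕ) × (Fin k → ℕ)}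

lemma le_of_mem_genPart (hp : p ∈ GenPart n) (i : Fin p.1) : p.2.1 i ≤ n ∧ p.2.2 i ≤ n := by
  obtain ⟨-, hv, hw, hsum, -⟩ := hp
  have hi : p.2.1 i * p.2.2 i ≤ n :=
    hsum ▸ Finset.single_le_sum (f := fun j => p.2.1 j * p.2.2 j) (fun j _ => Nat.zero_le _)
      (Finset.mem_univ i)
  exact ⟨(Nat.le_mul_of_pos_right _ (hw i)).trans hi, (Nat.le_mul_of_pos_left _ (hv i)).trans hi⟩

lemma length_le_of_mem_genPart (hp : p ∈ GenPart n) : p.1 ≤ n := by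
  obtain ⟨-, hv, hw, hsum, -⟩ := hp
  calc p.1 = ∑ _i : Fin p.1, 1 := by simp
    _ ≤ ∑ i, p.2.1 i * p.2.2 i := Finset.sum_le_sum fun i _ => Nat.mul_pos (hv i) (hw i)
    _ = n := hsum

lemma genPart_finite (n : ℕ) : (GenPart n).Finite := by
  have hbox (k : ℕ) : (Set.univ.pi fun _ : Fin k => Set.Iic n).Finite :=
    Set.Finite.pi fun _ => Set.finite_Iic n
  refine ((Set.finite_Iic n).biUnion fun k _ =>
    ((hbox k).prod (hbox k)).image (Sigma.mk k)).subset ?_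
  rintro ⟨k, v, w⟩ hp
  simp only [Set.mem_iUnion, Set.mem_image]
  exact ⟨k, length_le_of_mem_genPart hp, (v, w),
    ⟨fun i _ => (le_of_mem_genPart hp i).1, fun i _ => (le_of_mem_genPart hp i).2⟩, rfl⟩

lemma gcd_dvd_of_mem_genPart (hp : p ∈ GenPart n) : Finset.univ.gcd p.2.1 ∣ n :=
  hp.2.2.2.1 ▸ Finset.dvd_sum fun i _ => (Finset.gcd_dvd (Finset.mem_univ i)).mul_right _

def scaleFst (d : ℕ) : (Σ k : ℕ, (Fin k → ℕ) × (Fin k → ℕ)) → Σ k : ℕ, (Fin k → ℕ) × (Fin k → ℕ)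
  | ⟨k, v, w⟩ => ⟨k, fun i => d * v i, w⟩

lemma gcd_scaleFst (d : ℕ) (p : Σ k : ℕ, (Fin k → ℕ) × (Fin k → ℕ)) :
    Finset.univ.gcd (scaleFst d p).2.1 = d * Finset.univ.gcd p.2.1 := by
  obtain ⟨k, v, w⟩ := p
  exact (Finset.gcd_mul_left ..).trans (congrArg (· * _) (normalize_eq d))

lemma scaleFst_injective {d : ℕ} (hd : 0 < d) : Function.Injective (scaleFst d) := by
  rintro ⟨k, v, w⟩ ⟨k', v', w'⟩ h
  obtain ⟨rfl, h⟩ := Sigma.mk.inj_iff.mp h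
  obtain ⟨hv, rfl⟩ := Prod.mk.inj (eq_of_heq h)
  rw [funext fun i => Nat.eq_of_mul_eq_mul_left hd (congrFun hv i)]

lemma exists_scaleFst_eq {d : ℕ} (h : ∀ i, d ∣ p.2.1 i) : ∃ q, scaleFst d q = p := by
  obtain ⟨k, v, w⟩ := p
  exact ⟨⟨k, fun i => v i / d, w⟩, by simp [scaleFst, funext fun i => Nat.mul_div_cancel' (h i)]⟩

lemma scaleFst_mem_genPart_iff {d m : ℕ} (hd : 0 < d) :
    scaleFst d p ∈ GenPart (d * m) ↔ p ∈ GenPart m := by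
  obtain ⟨k, v, w⟩ := p
  have hanti : Antitone (fun i => d * (v i * w i)) ↔ Antitone (fun i => v i * w i) :=
    ⟨fun h _ _ hij => Nat.le_of_mul_le_mul_left (h hij) hd,
      fun h _ _ hij => Nat.mul_le_mul_left d (h hij)⟩
  simp only [GenPart, scaleFst, Set.mem_ofPred_eq, mul_assoc,
    ← Finset.mul_sum, Nat.mul_left_cancel_iff hd, hanti, Nat.mul_pos_iff_of_pos_left hd]

lemma image_scaleFst {d m : ℕ} (hd : 0 < d) :
    scaleFst d '' {p ∈ GenPart m | Finset.univ.gcd p.2.1 = 1} =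
      {p ∈ GenPart (d * m) | Finset.univ.gcd p.2.1 = d} := by
  ext p
  constructor
  · rintro ⟨q, ⟨hq, hgcd⟩, rfl⟩
    exact ⟨(scaleFst_mem_genPart_iff hd).2 hq, by rw [gcd_scaleFst, hgcd, mul_one]⟩
  · rintro ⟨hp, hgcd⟩
    obtain ⟨q, rfl⟩ := exists_scaleFst_eq fun i => hgcd ▸ Finset.gcd_dvd (Finset.mem_univ i)
    rw [gcd_scaleFst] at hgcd
    exact ⟨q, ⟨(scaleFst_mem_genPart_iff hd).1 hp,
      Nat.eq_of_mul_eq_mul_left hd (hgcd.trans (mul_one d).symm)⟩, rfl⟩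

lemma card_genPart_gcd_eq {d m : ℕ} (hd : 0 < d) :
    Nat.card {p ∈ GenPart (d * m) | Finset.univ.gcd p.2.1 = d} = genPartGcdOneCount m := by
  rw [← image_scaleFst hd, Nat.card_image_of_injective (scaleFst_injective hd)]
  rfl

lemma genPartCount_eq_sum_divisors {n : ℕ} (hn : 0 < n) :
    genPartCount n = ∑ r ∈ n.divisors, genPartGcdOneCount r := by
  rw [genPartCount,
    (genPart_finite n).card_eq_sum_card_fiberwise (f := fun p => Finset.univ.gcd p.2.1)
      fun p hp => Nat.mem_divisors.2 ⟨gcd_dvd_of_mem_genPart hp, hn.ne'⟩,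
    ← Nat.sum_div_divisors n genPartGcdOneCount]
  refine Finset.sum_congr rfl fun d hd => ?_
  have hd0 := Nat.pos_of_mem_divisors hd
  obtain ⟨m, rfl⟩ := Nat.dvd_of_mem_divisors hd
  rw [Nat.mul_div_cancel_left _ hd0, card_genPart_gcd_eq hd0]

end GenPart

open ArithmeticFunction in
/-- `p n = ∑_{r ∣ n} q r` and `q n = ∑_{r ∣ n} μ(r) p (n / r)` for `n ≥ 1`. -/
theorem genPart_counts (n : ℕ) (hn : 1 ≤ n) :
    genPartCount n = ∑ r ∈ n.divisors, genPartGcdOneCount r ∧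
      (genPartGcdOneCount n : ℤ) =
        ∑ r ∈ n.divisors, moebius r * (genPartCount (n / r) : ℤ) := by
  refine ⟨genPartCount_eq_sum_divisors hn, ?_⟩
  have inversion := (sum_eq_iff_sum_mul_moebius_eq (f := fun m => (genPartGcdOneCount m : ℤ))
    (g := fun m => (genPartCount m : ℤ))).1
    (fun m hm => by exact_mod_cast (genPartCount_eq_sum_divisors hm).symm) n hn
  rw [← inversion]
  simp only [Int.cast_id]
  exact Nat.sum_divisorsAntidiagonal fun x y => moebius x * (genPartCount y : ℤ)
end
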